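/- Let G be a linear algebraic group over a field F, H a closed subgroup, V a rational representation of G, and L ⊆ V a line whose stabilizer in G is exactly H. Suppose W is a rational representation of G such that the dual character of H acting on L occurs as an H-subrepresentation of W, spanned by a vector ℓ'. Then for any nonzero ℓ ∈ L, the stabilizer in G of the vector ℓ ⊗ ℓ' ∈ V ⊗ W is exactly H. -/

import Mathlib

open scoped TensorProduct

/-! Contracting `ℓ ⊗ ℓ'` against a functional that is `1` on `ℓ'` shows that any `g` fixing
`ℓ ⊗ ℓ'` sends `ℓ` to a nonzero multiple of itself, so `g` stabilizes the line and lies in `H`.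
Conversely, for `h ∈ H` the scalars `χ h` and `(χ h)⁻¹` cancel in the tensor product. -/

/-- `σ` is (isomorphic to) a subrepresentation of `ρ`: it embeds `H`-equivariantly. -/
def IsSubrep (F : Type) [Field F] {H W V : Type} [Group H]
    [AddCommGroup W] [Module F W] [AddCommGroup V] [Module F V]
    (σ : Representation F H W) (ρ : Representation F H V) : Prop :=
  ∃ f : W →ₗ[F] V, Function.Injective f ∧ ∀ (h : H) (w : W), f (σ h w) = ρ h (f w)

/-- `H` is observable in `G`: every finite-dimensional rational representation of `H`
(modelled on `Fin m → F`) embeds into the restriction to `H` of a representation of `G`. -/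
def Observable (F : Type) [Field F] (G : Type) [Group G] (H : Subgroup G) : Prop :=
  ∀ (m : ℕ) (σ : Representation F H (Fin m → F)),
    ∃ (n : ℕ) (ρ : Representation F G (Fin n → F)), IsSubrep F σ (ρ.comp H.subtype)

/-- The character `χ` of `H` occurs in (the restriction to `H` of) a representation of `G`. -/
def CharOccurs (F : Type) [Field F] (G : Type) [Group G] (H : Subgroup G) (χ : H →* Fˣ) : Prop :=
  ∃ (n : ℕ) (ρ : Representation F G (Fin n → F)) (v : Fin n → F),
    v ≠ 0 ∧ ∀ h : H, ρ (h : G) v = (χ h : F) • v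

theorem TensorProduct.exists_smul_eq_of_tmul_eq_tmul {K V W : Type*} [Field K]
    [AddCommGroup V] [Module K V] [AddCommGroup W] [Module K W]
    {v v' : V} {w w' : W} (hv : v ≠ 0) (hw : w ≠ 0) (h : v' ⊗ₜ[K] w' = v ⊗ₜ[K] w) :
    ∃ c : Kˣ, v' = (c : K) • v := by
  obtain ⟨φ, hφ⟩ := Module.Projective.exists_dual_eq_one K hw
  have hcontract : φ w' • v' = v := by
    simpa [hφ] using congrArg ((TensorProduct.rid K V).toLinearMap ∘ₗ LinearMap.lTensor V φ) h
  have hφw' : φ w' ≠ 0 := by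
    rintro h0
    exact hv (by rw [← hcontract, h0, zero_smul])
  refine ⟨(Units.mk0 _ hφw')⁻¹, ?_⟩
  rw [← hcontract, Units.val_inv_eq_inv_val, Units.val_mk0, inv_smul_smul₀ hφw']

theorem TensorProduct.map_tmul_eq_self_of_eq_smul {K V W : Type*} [Field K]
    [AddCommGroup V] [Module K V] [AddCommGroup W] [Module K W]
    {A : V →ₗ[K] V} {B : W →ₗ[K] W} {v : V} {w : W} (c : Kˣ)
    (hA : A v = (c : K) • v) (hB : B w = ((c⁻¹ : Kˣ) : K) • w) :
    TensorProduct.map A B (v ⊗ₜ[K] w) = v ⊗ₜ[K] w := by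
  rw [TensorProduct.map_tmul, hA, hB, TensorProduct.smul_tmul_smul, ← Units.val_mul,
    mul_inv_cancel, Units.val_one, one_smul]

/-- if `H` is exactly the stabilizer of the line `F·ℓ` in `V`, acting on it by
the character `χ`, and `ℓ' ∈ W` realizes the dual character `χ⁻¹` of `H`, then `H` is exactly
the isotropy group of the vector `ℓ ⊗ ℓ' ∈ V ⊗ W`. -/
theorem stabilizer_of_tensor_vector (F : Type) [Field F] {G : Type} [Group G] (H : Subgroup G)
    {V W : Type} [AddCommGroup V] [Module F V] [AddCommGroup W] [Module F W]
    (ρV : Representation F G V) (ρW : Representation F G W)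
    (ℓ : V) (hℓ : ℓ ≠ 0)
    (hH : ∀ g : G, g ∈ H ↔ ∃ c : Fˣ, ρV g ℓ = (c : F) • ℓ)
    (χ : H →* Fˣ) (hχ : ∀ h : H, ρV (h : G) ℓ = (χ h : F) • ℓ)
    (ℓ' : W) (hℓ' : ℓ' ≠ 0)
    (hχ' : ∀ h : H, ρW (h : G) ℓ' = (((χ h)⁻¹ : Fˣ) : F) • ℓ') :
    ∀ g : G, TensorProduct.map (ρV g) (ρW g) (ℓ ⊗ₜ[F] ℓ') = ℓ ⊗ₜ[F] ℓ' ↔ g ∈ H := by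
  intro g
  constructor
  · intro hg
    rw [TensorProduct.map_tmul] at hg
    exact (hH g).2 (TensorProduct.exists_smul_eq_of_tmul_eq_tmul hℓ hℓ' hg)
  · intro hg
    exact TensorProduct.map_tmul_eq_self_of_eq_smul (χ ⟨g, hg⟩) (hχ ⟨g, hg⟩) (hχ' ⟨g, hg⟩)
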